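/- If F ∈ End(W) is a diagonal matrix diag(α,β,γ,δ) satisfying (id_W ⊗ F) ∘ R_1 = R_1 ∘ (F ⊗ id_W), then α = β = γ = δ, i.e. F is a scalar multiple of the identity. -/

import Mathlib

open Matrix Kronecker

noncomputable section

variable {K : Type*} [Field K]

/-- The rigid R-matrix `R_r` of the `V₁`-polynomial, in the basis `(e_i ⊗ e_j)` of `W ⊗ W` (entry function: row pair `(k,l)` then column pair `(i,j)`, 0-based). -/
def RV1E (t0 t1 r : K) : ℕ → ℕ → ℕ → ℕ → K
  | 0, 0, 0, 0 => -1
  | 0, 1, 1, 0 => -1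
  | 1, 0, 0, 1 => -t0
  | 1, 0, 1, 0 => t0 - 1
  | 0, 2, 2, 0 => -1
  | 2, 0, 0, 2 => -t1
  | 2, 0, 2, 0 => t1 - 1
  | 1, 1, 1, 1 => t0
  | 2, 2, 2, 2 => t1
  | 0, 3, 3, 0 => -1
  | 1, 2, 2, 1 => -(r⁻¹ * t1⁻¹)
  | 1, 2, 3, 0 => t1⁻¹ - 1
  | 2, 1, 1, 2 => -(r * t1)
  | 2, 1, 3, 0 => r * (t1 - 1)
  | 3, 0, 0, 3 => -(t0 * t1)
  | 3, 0, 1, 2 => t1 * (t0 - 1)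
  | 3, 0, 2, 1 => (1 - t0) * r⁻¹
  | 3, 0, 3, 0 => t0 + t1 - 2
  | 1, 3, 3, 1 => r⁻¹ * t1⁻¹
  | 3, 1, 1, 3 => r * t0 * t1
  | 3, 1, 3, 1 => t0 - 1
  | 2, 3, 3, 2 => r * t1
  | 3, 2, 2, 3 => r⁻¹
  | 3, 2, 3, 2 => t1 - 1
  | 3, 3, 3, 3 => -1
  | _, _, _, _ => 0

/-- The rigid R-matrix `R_r` of the `V₁`-polynomial, in the basis `(e_i ⊗ e_j)` of `W ⊗ W`. -/
def RV1 (t0 t1 r : K) : Matrix (Fin 4 × Fin 4) (Fin 4 × Fin 4) K :=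
  Matrix.of fun p q => RV1E t0 t1 r p.1.val p.2.val q.1.val q.2.val

/-- The function field `ℚ(x0,x1)`. -/
abbrev K11 : Type := FractionRing (MvPolynomial (Fin 2) ℚ)

/-- The variable `t₀` of `ℚ(t₀,t₁)`. -/
def t0V : K11 := algebraMap (MvPolynomial (Fin 2) ℚ) K11 (MvPolynomial.X 0)
/-- The variable `t₁` of `ℚ(t₀,t₁)`. -/
def t1V : K11 := algebraMap (MvPolynomial (Fin 2) ℚ) K11 (MvPolynomial.X 1)

/-! `(id ⊗ F) R₁ = R₁ (F ⊗ id)` with `F = diag(a)` says `a_l R_{(k,l),(i,j)} = R_{(k,l),(i,j)} a_i`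
for every entry, so `a_l = a_i` whenever the entry is nonzero. The diagonal entries
`R_{(1,0),(1,0)} = t₀ - 1`, `R_{(2,0),(2,0)} = t₁ - 1` and `R_{(3,1),(3,1)} = t₀ - 1` are nonzero and link
`a₀ = a₁`, `a₀ = a₂`, `a₁ = a₃`. -/

theorem MvPolynomial.X_ne_one {R σ : Type*} [CommSemiring R] [Nontrivial R] (i : σ) :
    (MvPolynomial.X i : MvPolynomial σ R) ≠ 1 := fun h => by
  simpa [MvPolynomial.coeff_X] using congrArg (MvPolynomial.coeff 0) h

theorem t0V_ne_one : t0V ≠ 1 :=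
  (map_ne_one_iff _ (IsFractionRing.injective _ _)).mpr (MvPolynomial.X_ne_one 0)

theorem t1V_ne_one : t1V ≠ 1 :=
  (map_ne_one_iff _ (IsFractionRing.injective _ _)).mpr (MvPolynomial.X_ne_one 1)

namespace Matrix

variable {α m n : Type*}

theorem one_kronecker_diagonal [MulZeroOneClass α] [DecidableEq m] [DecidableEq n] (d : n → α) :
    (1 : Matrix m m α) ⊗ₖ diagonal d = diagonal fun p : m × n => d p.2 := by
  rw [← diagonal_one, diagonal_kronecker_diagonal]
  simp

theorem diagonal_kronecker_one [MulZeroOneClass α] [DecidableEq m] [DecidableEq n] (d : m → α) :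
    diagonal d ⊗ₖ (1 : Matrix n n α) = diagonal fun p : m × n => d p.1 := by
  rw [← diagonal_one, diagonal_kronecker_diagonal]
  simp

theorem eq_of_diagonal_mul_eq_mul_diagonal [CommSemiring α] [IsDomain α] [Fintype n] [DecidableEq n]
    {d e : n → α} {M : Matrix n n α} (h : diagonal d * M = M * diagonal e) {p q : n}
    (hM : M p q ≠ 0) : d p = e q := by
  have hpq : d p * M p q = M p q * e q := by
    simpa only [diagonal_mul, mul_diagonal] using congrFun (congrFun h p) q
  exact mul_right_cancel₀ hM (hpq.trans (mul_comm _ _))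

end Matrix

theorem eq_of_one_kronecker_diagonal_mul_RV1 {t0 t1 r : K} (h0 : t0 ≠ 1) (h1 : t1 ≠ 1)
    {a : Fin 4 → K}
    (hF : ((1 : Matrix (Fin 4) (Fin 4) K) ⊗ₖ diagonal a) * RV1 t0 t1 r =
      RV1 t0 t1 r * (diagonal a ⊗ₖ (1 : Matrix (Fin 4) (Fin 4) K))) (i j : Fin 4) :
    a i = a j := by
  rw [one_kronecker_diagonal, diagonal_kronecker_one] at hF
  have link (k l i' j' : Fin 4) (hR : RV1 t0 t1 r (k, l) (i', j') ≠ 0) : a l = a i' :=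
    eq_of_diagonal_mul_eq_mul_diagonal hF hR
  have h01 : a 0 = a 1 := link 1 0 1 0 (sub_ne_zero.mpr h0)
  have h02 : a 0 = a 2 := link 2 0 2 0 (sub_ne_zero.mpr h1)
  have h13 : a 1 = a 3 := link 3 1 3 1 (sub_ne_zero.mpr h0)
  have eq_a0 (k : Fin 4) : a k = a 0 := by
    fin_cases k
    exacts [rfl, h01.symm, h02.symm, (h01.trans h13).symm]
  exact (eq_a0 i).trans (eq_a0 j).symm

/-- a diagonal `F = diag(a₁,a₂,a₃,a₄)` with `(id⊗F)∘R₁ = R₁∘(F⊗id)`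
is a scalar multiple of the identity. -/
theorem V1_P1 (a1 a2 a3 a4 : K11)
    (hF : ((1 : Matrix (Fin 4) (Fin 4) K11) ⊗ₖ Matrix.diagonal ![a1, a2, a3, a4]) * RV1 t0V t1V 1 =
      RV1 t0V t1V 1 * ((Matrix.diagonal ![a1, a2, a3, a4]) ⊗ₖ (1 : Matrix (Fin 4) (Fin 4) K11))) :
    a1 = a2 ∧ a2 = a3 ∧ a3 = a4 := by
  have scalar := eq_of_one_kronecker_diagonal_mul_RV1 t0V_ne_one t1V_ne_one hF
  exact ⟨scalar 0 1, scalar 1 2, scalar 2 3⟩
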